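/- The set E6' = (√(5/8)·S_even × {-√3/2}) ∪ (D5 × {0}) ∪ (√(5/8)·S_odd × {√3/2}) of 72 points in ℝ^6 is a kissing configuration: every point has squared norm 2 and any two distinct points have inner product at most 1. -/

import Mathlib

/-- The D5 root system: vectors in ℝ^5 with exactly two nonzero coordinates, each ±1. -/
def D5 : Set (Fin 5 → ℝ) :=
  {v | (∀ i, v i = -1 ∨ v i = 0 ∨ v i = 1) ∧
    (Finset.univ.filter fun i => v i ≠ 0).card = 2}

/-- The 16 vectors with all coordinates `±√(2/5)` and an even number of minus signs. -/
def Seven : Set (Fin 5 → ℝ) :=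
  {v | (∀ i, v i = Real.sqrt (2/5) ∨ v i = -Real.sqrt (2/5)) ∧
    Even (Finset.univ.filter fun i => v i = -Real.sqrt (2/5)).card}

/-- The 16 vectors with all coordinates `±√(2/5)` and an odd number of minus signs. -/
def Sodd : Set (Fin 5 → ℝ) :=
  {v | (∀ i, v i = Real.sqrt (2/5) ∨ v i = -Real.sqrt (2/5)) ∧
    Odd (Finset.univ.filter fun i => v i = -Real.sqrt (2/5)).card}

/-- Append a sixth coordinate `h` to `c • t` for `t` in a set `T ⊆ ℝ^5`. -/
def layer (c : ℝ) (T : Set (Fin 5 → ℝ)) (h : ℝ) : Set (Fin 6 → ℝ) :=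
  (fun t => Fin.snoc (fun i => c * t i) h) '' T

/-- The E6 kissing configuration built from a `D5` cross section and two layers of holes. -/
noncomputable def E6' : Set (Fin 6 → ℝ) :=
  layer (Real.sqrt (5/8)) Seven (-(Real.sqrt 3 / 2)) ∪
  layer 1 D5 0 ∪
  layer (Real.sqrt (5/8)) Sodd (Real.sqrt 3 / 2)

/-!
Record the sign pattern of a point in the two outer layers as `ε : Fin 5 → ℤˣ`. Both outer layers
together are then the points `(ε / 2, -(∏ ε) √3 / 2)`: the parity of the number of minus signs decides
the layer. The middle layer consists of the points `(d, 0)` with `d` a sign vector with two nonzero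
entries. All these points have squared norm 2, and all their inner products are integers. For two
outer points the inner product is `(∑ δᵢ + 3 ∏ δᵢ) / 4` with `δ = ε ε'`, and if `δ` has `k` minus signs
the numerator is `5 - 2k + 3 (-1)ᵏ ≡ 0 (mod 4)`. For an outer and a middle point it is half a sum of
two terms `±1`. Two distinct vectors of squared norm 2 have inner product less than 2, so it is at
most 1 when it is an integer.
-/

open Finset Matrix

section

variable {ι : Type*} [Fintype ι]

theorem dotProduct_le_sub_one_of_eq_intCast {u v : ι → ℝ} {m k : ℤ} (huv : u ≠ v)
    (hu : u ⬝ᵥ u = m) (hv : v ⬝ᵥ v = m) (hk : u ⬝ᵥ v = k) : u ⬝ᵥ v ≤ m - 1 := by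
  have hne : (u - v) ⬝ᵥ (u - v) ≠ 0 := dotProduct_self_eq_zero.not.mpr (sub_ne_zero.mpr huv)
  have hnonneg : 0 ≤ (u - v) ⬝ᵥ (u - v) := sum_nonneg fun i _ => mul_self_nonneg _
  have hexpand : (u - v) ⬝ᵥ (u - v) = u ⬝ᵥ u - 2 * u ⬝ᵥ v + v ⬝ᵥ v := by
    simp only [sub_dotProduct, dotProduct_sub, dotProduct_comm v u]
    ring
  have hlt : k < m := by exact_mod_cast (show (k : ℝ) < m by linarith [hnonneg.lt_of_ne hne.symm])
  rw [hk]
  exact_mod_cast Int.le_sub_one_of_lt hlt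

theorem Int.units_eq_ite (u : ℤˣ) : u = if u = -1 then -1 else 1 := by
  rcases Int.units_eq_one_or u with rfl | rfl <;> decide

theorem prod_units_int_eq_neg_one_pow (ε : ι → ℤˣ) :
    ∏ i, ε i = (-1) ^ #{i | ε i = -1} := by
  conv_lhs => enter [2, i]; rw [Int.units_eq_ite (ε i)]
  rw [← prod_filter, prod_const]

theorem sum_units_int_eq_card_sub (ε : ι → ℤˣ) :
    ∑ i, (ε i : ℤ) = Fintype.card ι - 2 * #{i | ε i = -1} := by
  have h : ∀ i, (ε i : ℤ) = 1 - 2 * if ε i = -1 then 1 else 0 := by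
    intro i
    rcases Int.units_eq_one_or (ε i) with h | h <;> simp [h]
  simp only [h, sum_sub_distrib, ← mul_sum, sum_boole, sum_const, card_univ]
  simp only [Int.nsmul_eq_mul, mul_one]

theorem sum_units_int_add_three_mul_prod_modEq (ε : ι → ℤˣ) :
    ∑ i, (ε i : ℤ) + 3 * ((∏ i, ε i : ℤˣ) : ℤ) ≡ Fintype.card ι + 3 [ZMOD 4] := by
  rw [sum_units_int_eq_card_sub, prod_units_int_eq_neg_one_pow, Int.modEq_iff_dvd]
  obtain ⟨m, hm | hm⟩ := Nat.even_or_odd' #{i | ε i = -1} <;> rw [hm] <;> push_cast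
  · exact ⟨m, by rw [pow_mul]; ring⟩
  · exact ⟨m + 2, by rw [pow_succ, pow_mul]; ring⟩

theorem sum_units_int_mul_signType_modEq (ε : ι → ℤˣ) (d : ι → SignType) :
    ∑ i, (ε i : ℤ) * (d i : ℤ) ≡ #{i | d i ≠ 0} [ZMOD 2] := by
  rw [← sum_boole]
  refine Int.ModEq.sum fun i _ => ?_
  rcases Int.units_eq_one_or (ε i) with h | h <;> cases d i <;> simp [h] <;> decide

theorem sum_signType_mul_self {R : Type*} [Ring R] (d : ι → SignType) :
    ∑ i, (d i : R) * (d i : R) = #{i | d i ≠ 0} := by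
  rw [← sum_boole]
  refine sum_congr rfl fun i _ => ?_
  cases d i <;> simp

theorem SignType.cast_real_injective : Function.Injective ((↑) : SignType → ℝ) := by
  intro a b
  cases a <;> cases b <;> norm_num

theorem SignType.cast_real_eq_zero {s : SignType} : (s : ℝ) = 0 ↔ s = 0 := by
  cases s <;> norm_num

theorem setOf_eq_image_signs {r : ℝ} (hr : r ≠ 0) (P : ℕ → Prop) :
    {t : ι → ℝ | (∀ i, t i = r ∨ t i = -r) ∧ P #{i | t i = -r}} =
      (fun (ε : ι → ℤˣ) i => ((ε i : ℤ) : ℝ) * r) '' {ε | P #{i | ε i = -1}} := by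
  have hr' : r ≠ -r := fun h => hr (by linarith)
  have key : ∀ u : ℤˣ, ((u : ℤ) : ℝ) * r = -r ↔ u = -1 := by
    intro u
    rcases Int.units_eq_one_or u with rfl | rfl <;> simp [hr']
  ext t
  constructor
  · rintro ⟨ht, hP⟩
    refine ⟨fun i => if t i = -r then -1 else 1, by simpa [key] using hP, funext fun i => ?_⟩
    rcases ht i with h | h <;> simp [h, hr']
  · rintro ⟨ε, hε, rfl⟩
    refine ⟨fun i => ?_, by simpa [key] using hε⟩
    rcases Int.units_eq_one_or (ε i) with h | h <;> simp [h]

end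

theorem snoc_dotProduct_snoc {R : Type*} [CommSemiring R] {n : ℕ} (x y : Fin n → R) (a b : R) :
    (Fin.snoc x a : Fin (n + 1) → R) ⬝ᵥ Fin.snoc y b = x ⬝ᵥ y + a * b := by
  simp [dotProduct, Fin.sum_univ_castSucc]

noncomputable def signPoint (ε : Fin 5 → ℤˣ) : Fin 6 → ℝ :=
  Fin.snoc (fun i => (ε i : ℤ) / 2) (-((∏ i, ε i : ℤˣ) : ℤ) * (√3 / 2))

noncomputable def rootPoint (d : Fin 5 → SignType) : Fin 6 → ℝ :=
  Fin.snoc (fun i => (d i : ℝ)) 0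

def rootSigns : Finset (Fin 5 → SignType) := {d | #{i | d i ≠ 0} = 2}

theorem card_rootSigns : #rootSigns = 40 := by decide

theorem signPoint_dotProduct_signPoint (ε ε' : Fin 5 → ℤˣ) :
    signPoint ε ⬝ᵥ signPoint ε' =
      ((∑ i, ((ε * ε') i : ℤ) + 3 * ((∏ i, (ε * ε') i : ℤˣ) : ℤ) : ℤ) : ℝ) / 4 := by
  have h3 : √3 * √3 = 3 := Real.mul_self_sqrt (by norm_num)
  rw [signPoint, signPoint, snoc_dotProduct_snoc]
  simp only [dotProduct, Pi.mul_apply, prod_mul_distrib, Units.coe_prod]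
  push_cast
  rw [add_div, sum_div]
  congr 1
  · exact sum_congr rfl fun i _ => by ring
  · linear_combination (1 / 4 * (∏ i, ((ε i : ℤ) : ℝ)) * ∏ i, ((ε' i : ℤ) : ℝ)) * h3

theorem signPoint_dotProduct_rootPoint (ε : Fin 5 → ℤˣ) (d : Fin 5 → SignType) :
    signPoint ε ⬝ᵥ rootPoint d = ((∑ i, (ε i : ℤ) * (d i : ℤ) : ℤ) : ℝ) / 2 := by
  rw [signPoint, rootPoint, snoc_dotProduct_snoc]
  simp [dotProduct, sum_div, div_mul_eq_mul_div]

theorem rootPoint_dotProduct_rootPoint (d d' : Fin 5 → SignType) :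
    rootPoint d ⬝ᵥ rootPoint d' = ((∑ i, (d i : ℤ) * (d' i : ℤ) : ℤ) : ℝ) := by
  rw [rootPoint, rootPoint, snoc_dotProduct_snoc]
  simp [dotProduct]

theorem signPoint_injective : Function.Injective signPoint := by
  intro ε ε' h
  funext i
  have := congrFun h i.castSucc
  simp only [signPoint, Fin.snoc_castSucc] at this
  exact Units.ext (by exact_mod_cast (show ((ε i : ℤ) : ℝ) = (ε' i : ℤ) by linarith))

theorem rootPoint_injective : Function.Injective rootPoint := by
  intro d d' h
  funext i
  exact SignType.cast_real_injective (by simpa [rootPoint] using congrFun h i.castSucc)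

theorem D5_eq_image : D5 = (fun (d : Fin 5 → SignType) i => (d i : ℝ)) '' rootSigns := by
  ext v
  constructor
  · rintro ⟨hv, hcard⟩
    refine ⟨fun i => SignType.sign (v i), by simpa [rootSigns] using hcard, funext fun i => ?_⟩
    rcases hv i with h | h | h <;> simp [h]
  · rintro ⟨d, hd, rfl⟩
    refine ⟨fun i => by dsimp only; cases d i <;> simp, ?_⟩
    simpa [rootSigns, SignType.cast_real_eq_zero] using hd

theorem layer_D5_eq : layer 1 D5 0 = rootPoint '' rootSigns := by
  rw [layer, D5_eq_image, Set.image_image]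
  simp only [one_mul]
  rfl

theorem layer_image_signs_eq (P : ℕ → Prop) (h : ℝ)
    (hP : ∀ ε : Fin 5 → ℤˣ, P #{i | ε i = -1} → -((∏ i, ε i : ℤˣ) : ℤ) * (√3 / 2) = h) :
    layer √(5 / 8) ((fun (ε : Fin 5 → ℤˣ) i => ((ε i : ℤ) : ℝ) * √(2 / 5)) ''
      {ε | P #{i | ε i = -1}}) h = signPoint '' {ε | P #{i | ε i = -1}} := by
  have hcr : √(5 / 8) * √(2 / 5) = 1 / 2 := by
    rw [← Real.sqrt_mul (by norm_num), show (5 / 8 : ℝ) * (2 / 5) = (1 / 2) ^ 2 by norm_num,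
      Real.sqrt_sq (by norm_num)]
  rw [layer, Set.image_image]
  refine Set.image_congr fun ε hε => ?_
  rw [signPoint, hP ε hε]
  congr 1
  funext i
  linear_combination ((ε i : ℤ) : ℝ) * hcr

theorem layer_Seven_union_layer_Sodd :
    layer √(5 / 8) Seven (-(√3 / 2)) ∪ layer √(5 / 8) Sodd (√3 / 2) = Set.range signPoint := by
  have hr : √(2 / 5) ≠ 0 := (Real.sqrt_pos.mpr (by norm_num)).ne'
  rw [Seven, Sodd, setOf_eq_image_signs hr, setOf_eq_image_signs hr,
    layer_image_signs_eq Even _ fun ε hε => ?_, layer_image_signs_eq Odd _ fun ε hε => ?_,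
    ← Set.image_union, ← Set.ofPred_or]
  · simp [Nat.even_or_odd]
  · rw [prod_units_int_eq_neg_one_pow, hε.neg_one_pow]; simp
  · rw [prod_units_int_eq_neg_one_pow, hε.neg_one_pow]; simp

theorem E6'_eq : E6' = Set.range signPoint ∪ rootPoint '' rootSigns := by
  rw [E6', Set.union_right_comm, layer_Seven_union_layer_Sodd, layer_D5_eq]

theorem dotProduct_self_eq_two {u : Fin 6 → ℝ} (hu : u ∈ E6') : u ⬝ᵥ u = 2 := by
  rw [E6'_eq] at hu
  rcases hu with ⟨ε, rfl⟩ | ⟨d, hd, rfl⟩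
  · rw [signPoint_dotProduct_signPoint]
    simp only [Pi.mul_apply, Int.units_mul_self, prod_const_one, Units.val_one, sum_const,
      card_univ, Fintype.card_fin]
    norm_num
  · rw [rootPoint_dotProduct_rootPoint]
    push_cast
    rw [sum_signType_mul_self, (mem_filter.mp hd).2]
    norm_num

theorem exists_dotProduct_eq_intCast {u v : Fin 6 → ℝ} (hu : u ∈ E6') (hv : v ∈ E6') :
    ∃ k : ℤ, u ⬝ᵥ v = k := by
  have mixed : ∀ ε, ∀ d ∈ rootSigns, ∃ k : ℤ, signPoint ε ⬝ᵥ rootPoint d = k := by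
    intro ε d hd
    have h := sum_units_int_mul_signType_modEq ε d
    rw [(mem_filter.mp hd).2] at h
    obtain ⟨k, hk⟩ := (Int.modEq_zero_iff_dvd.mp (h.trans (by decide)))
    exact ⟨k, by rw [signPoint_dotProduct_rootPoint, hk]; push_cast; ring⟩
  rw [E6'_eq] at hu hv
  rcases hu with ⟨ε, rfl⟩ | ⟨d, hd, rfl⟩ <;> rcases hv with ⟨ε', rfl⟩ | ⟨d', hd', rfl⟩
  · obtain ⟨k, hk⟩ := Int.modEq_zero_iff_dvd.mp
      ((sum_units_int_add_three_mul_prod_modEq (ε * ε')).trans (by decide))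
    exact ⟨k, by rw [signPoint_dotProduct_signPoint, hk]; push_cast; ring⟩
  · exact mixed ε d' hd'
  · rw [dotProduct_comm]
    exact mixed ε' d hd
  · exact ⟨_, rootPoint_dotProduct_rootPoint d d'⟩

theorem ncard_E6' : E6'.ncard = 72 := by
  have hdisj : Disjoint (Set.range signPoint) (rootPoint '' rootSigns) := by
    rw [Set.disjoint_left]
    rintro _ ⟨ε, rfl⟩ ⟨d, -, hd⟩
    have hlast := congrFun hd (Fin.last 5)
    simp only [signPoint, rootPoint, Fin.snoc_last] at hlast
    exact mul_ne_zero (neg_ne_zero.mpr (by exact_mod_cast Units.ne_zero _)) (by positivity)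
      hlast.symm
  rw [E6'_eq, Set.ncard_union_eq hdisj (Set.finite_range _) (Set.toFinite _),
    Set.ncard_range_of_injective signPoint_injective,
    Set.ncard_image_of_injective _ rootPoint_injective, Set.ncard_coe_finset, card_rootSigns]
  simp

theorem stmt14 :
    Set.ncard E6' = 72 ∧
    (∀ v ∈ E6', ∑ i, v i * v i = 2) ∧
    (∀ u ∈ E6', ∀ v ∈ E6', u ≠ v → ∑ i, u i * v i ≤ 1) := by
  refine ⟨ncard_E6', fun v hv => dotProduct_self_eq_two hv, fun u hu v hv huv => ?_⟩
  obtain ⟨k, hk⟩ := exists_dotProduct_eq_intCast hu hv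
  have hu2 : u ⬝ᵥ u = ((2 : ℤ) : ℝ) := by exact_mod_cast dotProduct_self_eq_two hu
  have hv2 : v ⬝ᵥ v = ((2 : ℤ) : ℝ) := by exact_mod_cast dotProduct_self_eq_two hv
  exact (dotProduct_le_sub_one_of_eq_intCast huv hu2 hv2 hk).trans_eq (by norm_num)
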